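/- arXiv:1402.0958 — 2 statements merged into one kernel-verified Lean document; each statement's English description precedes it below -/
import Mathlib

section
/- (Knight's identity, rescaled) For all u, v ∈ ℝ with u ≠ 0, ρ_τ(u − v) − ρ_τ(u) = −v ψ_τ(u) + 2∫₀^v (1{u ≤ s} − 1{u ≤ 0}) ds. -/
/-! The integrand `s ↦ 1{u ≤ s}` is the right derivative of `s ↦ max s u` everywhere, so its
integral over `[a, b]` is `max b u - max a u`. With `|u - v| = 2 max v u - u - v`, the identity
becomes linear arithmetic once the sign of `u` fixes `ψ_τ(u)` and `1{u ≤ 0}`. -/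

open Set

lemma hasDerivWithinAt_max_const_Ioi (u x : ℝ) :
    HasDerivWithinAt (fun s => max s u) (if u ≤ x then 1 else 0) (Ioi x) x := by
  split_ifs with hux
  · exact (hasDerivWithinAt_id x _).congr (fun s hs => max_eq_left (hux.trans (le_of_lt hs)))
      (max_eq_left hux)
  · have hxu : x < u := not_le.mp hux
    refine ((hasDerivAt_const x u).congr_of_eventuallyEq ?_).hasDerivWithinAt
    filter_upwards [Iio_mem_nhds hxu] with s hs using max_eq_right (le_of_lt hs)

lemma monotone_ite_le (u : ℝ) : Monotone (fun s : ℝ => if u ≤ s then (1:ℝ) else 0) := by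
  intro a b hab
  dsimp only
  split_ifs with ha hb hb
  · exact le_rfl
  · exact absurd (ha.trans hab) hb
  · exact zero_le_one
  · exact le_rfl

lemma integral_ite_le (u a b : ℝ) :
    ∫ s in a..b, (if u ≤ s then (1:ℝ) else 0) = max b u - max a u :=
  intervalIntegral.integral_eq_sub_of_hasDeriv_right (continuous_id.max continuous_const).continuousOn
    (fun x _ => hasDerivWithinAt_max_const_Ioi u x) (monotone_ite_le u).intervalIntegrable

theorem knight_identity_general (τ : ℝ) (u v : ℝ) (hu : u ≠ 0) :
    (|u - v| + (2 * τ - 1) * (u - v)) - (|u| + (2 * τ - 1) * u) =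
      -v * (2 * τ * (if u > 0 then (1:ℝ) else 0) + 2 * (τ - 1) * (if u < 0 then (1:ℝ) else 0))
      + 2 * ∫ s in (0:ℝ)..v, ((if u ≤ s then (1:ℝ) else 0) - (if u ≤ 0 then (1:ℝ) else 0)) := by
  rw [intervalIntegral.integral_sub (monotone_ite_le u).intervalIntegrable intervalIntegrable_const,
    integral_ite_le, intervalIntegral.integral_const, smul_eq_mul, sub_zero]
  have habs : |u - v| = 2 * max v u - u - v := by
    rcases le_total v u with h | h
    · rw [abs_of_nonneg (sub_nonneg.mpr h), max_eq_right h]; ring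
    · rw [abs_of_nonpos (sub_nonpos.mpr h), max_eq_left h]; ring
  rw [habs]
  rcases hu.lt_or_gt with hneg | hpos
  · simp only [hneg, hneg.le, not_lt.mpr hneg.le, max_eq_left hneg.le, abs_of_neg hneg,
      if_true, if_false]
    ring
  · simp only [hpos, not_lt.mpr hpos.le, not_le.mpr hpos, max_eq_right hpos.le, abs_of_pos hpos,
      if_true, if_false]
    ring

theorem knight_identity (τ : ℝ) (hτ : τ ∈ Set.Ioo (0:ℝ) 1) (u v : ℝ) (hu : u ≠ 0) :
    (|u - v| + (2 * τ - 1) * (u - v)) - (|u| + (2 * τ - 1) * u) =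
      -v * (2 * τ * (if u > 0 then (1:ℝ) else 0) + 2 * (τ - 1) * (if u < 0 then (1:ℝ) else 0))
      + 2 * ∫ s in (0:ℝ)..v, ((if u ≤ s then (1:ℝ) else 0) - (if u ≤ 0 then (1:ℝ) else 0)) :=
  knight_identity_general τ u v hu
end

section
/- If the real random variable ε has a probability density function bounded by a constant C > 0, then for every z ∈ ℝ, E[(ψ_τ(ε + z) − ψ_τ(ε))²] ≤ 8C|z|. -/
open MeasureTheory Set

/-!
The score `ψ_τ` takes its values in `[2τ - 2, 2τ]`, an interval of length 2, and
`ψ_τ(y + z) = ψ_τ(y)` unless `y` lies between `-z` and `0`. Hence the squared increment is at most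
`4 · 1{ε ∈ [-z, 0]}`, and a density bounded by `C` gives `P(ε ∈ [-z, 0]) ≤ C |z|`.
-/

/-- `ψ_τ`: twice the derivative of the check loss `u ↦ u (τ - 1{u < 0})` away from `0`. -/
noncomputable def quantileScore (τ y : ℝ) : ℝ :=
  2 * τ * (if y > 0 then (1:ℝ) else 0) + 2 * (τ - 1) * (if y < 0 then (1:ℝ) else 0)

lemma quantileScore_mem_Icc {τ : ℝ} (hτ : τ ∈ Icc (0:ℝ) 1) (y : ℝ) :
    quantileScore τ y ∈ Icc (2 * τ - 2) (2 * τ) := by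
  obtain ⟨hτ0, hτ1⟩ := hτ
  unfold quantileScore
  rcases lt_trichotomy y 0 with hy | rfl | hy
  · rw [if_neg hy.not_gt, if_pos hy]; constructor <;> linarith
  · simp only [lt_irrefl, if_false]; constructor <;> linarith
  · rw [if_pos hy, if_neg hy.not_gt]; constructor <;> linarith

lemma sq_quantileScore_sub_le_four {τ : ℝ} (hτ : τ ∈ Icc (0:ℝ) 1) (a b : ℝ) :
    (quantileScore τ a - quantileScore τ b) ^ 2 ≤ 4 := by
  obtain ⟨ha₁, ha₂⟩ := quantileScore_mem_Icc hτ a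
  obtain ⟨hb₁, hb₂⟩ := quantileScore_mem_Icc hτ b
  nlinarith

lemma quantileScore_add_eq_of_notMem_uIcc (τ : ℝ) {y z : ℝ} (hy : y ∉ uIcc (-z) 0) :
    quantileScore τ (y + z) = quantileScore τ y := by
  rw [mem_uIcc, not_or, not_and_or, not_and_or, not_le, not_le, not_le, not_le] at hy
  unfold quantileScore
  rcases lt_or_gt_of_ne (show y ≠ 0 by rintro rfl; rcases hy with ⟨h | h, h' | h'⟩ <;> linarith)
    with hneg | hpos
  · have hyz : y + z < 0 := by rcases hy with ⟨h | h, _⟩ <;> linarith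
    rw [if_neg hyz.not_gt, if_neg hneg.not_gt, if_pos hyz, if_pos hneg]
  · have hyz : 0 < y + z := by rcases hy with ⟨_, h | h⟩ <;> linarith
    rw [if_pos hyz, if_pos hpos, if_neg hyz.not_gt, if_neg hpos.not_gt]

lemma sq_quantileScore_add_sub_le_indicator {τ : ℝ} (hτ : τ ∈ Icc (0:ℝ) 1) (y z : ℝ) :
    (quantileScore τ (y + z) - quantileScore τ y) ^ 2 ≤ (uIcc (-z) 0).indicator (fun _ ↦ 4) y := by
  by_cases hy : y ∈ uIcc (-z) 0
  · rw [indicator_of_mem hy]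
    exact sq_quantileScore_sub_le_four hτ _ _
  · rw [indicator_of_notMem hy, quantileScore_add_eq_of_notMem_uIcc τ hy, sub_self]
    norm_num

lemma measure_preimage_le_of_density_le {Ω α : Type*} [MeasurableSpace Ω] [MeasurableSpace α]
    {μ : Measure Ω} {ν : Measure α} {X : Ω → α} (hX : Measurable X) {f : α → ℝ} {C : ℝ}
    (hfC : ∀ y, f y ≤ C) (hdens : μ.map X = ν.withDensity (fun y ↦ ENNReal.ofReal (f y)))
    {S : Set α} (hS : MeasurableSet S) :
    μ (X ⁻¹' S) ≤ ENNReal.ofReal C * ν S := by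
  rw [← Measure.map_apply hX hS, hdens, withDensity_apply _ hS]
  calc ∫⁻ y in S, ENNReal.ofReal (f y) ∂ν ≤ ∫⁻ _ in S, ENNReal.ofReal C ∂ν :=
        lintegral_mono fun y ↦ ENNReal.ofReal_le_ofReal (hfC y)
    _ = ENNReal.ofReal C * ν S := setLIntegral_const S _

theorem psi_tau_squared_increment_bound_general {Ω : Type*} [MeasureSpace Ω]
    [IsProbabilityMeasure (volume : Measure Ω)]
    (τ : ℝ) (hτ : τ ∈ Set.Ioo (0:ℝ) 1) (ε : Ω → ℝ) (hmeas : Measurable ε)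
    (f : ℝ → ℝ)
    (C : ℝ) (hC : 0 < C) (hfC : ∀ y, f y ≤ C)
    (hdens : Measure.map ε volume
      = (volume : Measure ℝ).withDensity (fun y => ENNReal.ofReal (f y)))
    (z : ℝ) :
    (∫ ω : Ω, ((2 * τ * (if ε ω + z > 0 then (1:ℝ) else 0)
          + 2 * (τ - 1) * (if ε ω + z < 0 then (1:ℝ) else 0))
        - (2 * τ * (if ε ω > 0 then (1:ℝ) else 0)
          + 2 * (τ - 1) * (if ε ω < 0 then (1:ℝ) else 0)))^2)
      ≤ 8 * C * |z| := by
  change ∫ ω, (quantileScore τ (ε ω + z) - quantileScore τ (ε ω)) ^ 2 ≤ 8 * C * |z|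
  set S := uIcc (-z) (0:ℝ)
  have hS : MeasurableSet (ε ⁻¹' S) := hmeas measurableSet_uIcc
  have hprob : volume.real (ε ⁻¹' S) ≤ C * |z| := by
    refine ENNReal.toReal_le_of_le_ofReal (by positivity) ?_
    calc volume (ε ⁻¹' S) ≤ ENNReal.ofReal C * volume S :=
          measure_preimage_le_of_density_le hmeas hfC hdens measurableSet_uIcc
      _ = ENNReal.ofReal (C * |z|) := by
          rw [Real.volume_interval, zero_sub, neg_neg, ENNReal.ofReal_mul hC.le]
  calc ∫ ω, (quantileScore τ (ε ω + z) - quantileScore τ (ε ω)) ^ 2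
      ≤ ∫ ω, (ε ⁻¹' S).indicator (fun _ ↦ (4:ℝ)) ω :=
        integral_mono_of_nonneg (ae_of_all _ fun _ ↦ sq_nonneg _)
          ((integrable_const _).indicator hS)
          (ae_of_all _ fun ω ↦ sq_quantileScore_add_sub_le_indicator (Ioo_subset_Icc_self hτ) _ z)
    _ = volume.real (ε ⁻¹' S) * 4 := integral_indicator_const _ hS
    _ ≤ 8 * C * |z| := by nlinarith [abs_nonneg z]

theorem psi_tau_squared_increment_bound {Ω : Type*} [MeasureSpace Ω]
    [IsProbabilityMeasure (volume : Measure Ω)]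
    (τ : ℝ) (hτ : τ ∈ Set.Ioo (0:ℝ) 1) (ε : Ω → ℝ) (hmeas : Measurable ε)
    (f : ℝ → ℝ) (hf : Measurable f) (hf0 : ∀ y, 0 ≤ f y)
    (C : ℝ) (hC : 0 < C) (hfC : ∀ y, f y ≤ C)
    (hdens : Measure.map ε volume
      = (volume : Measure ℝ).withDensity (fun y => ENNReal.ofReal (f y)))
    (z : ℝ) :
    (∫ ω : Ω, ((2 * τ * (if ε ω + z > 0 then (1:ℝ) else 0)
          + 2 * (τ - 1) * (if ε ω + z < 0 then (1:ℝ) else 0))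
        - (2 * τ * (if ε ω > 0 then (1:ℝ) else 0)
          + 2 * (τ - 1) * (if ε ω < 0 then (1:ℝ) else 0)))^2)
      ≤ 8 * C * |z| :=
  psi_tau_squared_increment_bound_general τ hτ ε hmeas f C hC hfC hdens z
end
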